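/- Let V ⊆ P^n be a nonempty equidimensional projective variety of dimension r. Let u_0, …, u_r be blocks of n+1 variables each, and let C ∈ F[u_0, …, u_r] be a polynomial with the property that for every choice of γ_0, …, γ_r ∈ F^{n+1}, the projective linear subspace V(Σ_{j=0}^n γ_{0,j} x_j, …, Σ_{j=0}^n γ_{r,j} x_j) has a point in V if and only if C(γ_0, …, γ_r) = 0. Let φ: F[u_0, …, u_r] → F[v_0, …, v_r] be the ring homomorphism defined by φ(u_{i,j}) = v_i^j. Then φ(C) is a nonzero polynomial in F[v_0, …, v_r]. -/

import Mathlib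

open MvPolynomial Classical

variable (F : Type) [Field F] [IsAlgClosed F]

/-- The zero set in `ℙ^n` of a homogeneous polynomial in `n+1` variables. -/
def projZeroSet (n : ℕ) (f : MvPolynomial (Fin (n + 1)) F) :
    Set (Projectivization F (Fin (n + 1) → F)) :=
  {x | MvPolynomial.eval x.rep f = 0}

/-- A projective variety in `ℙ^n`: the common zero set of a family of
homogeneous polynomials. -/
def IsProjVariety (n : ℕ) (V : Set (Projectivization F (Fin (n + 1) → F))) : Prop :=
  ∃ S : Set (MvPolynomial (Fin (n + 1)) F),
    (∀ f ∈ S, ∃ m, f.IsHomogeneous m) ∧ V = ⋂ f ∈ S, projZeroSet F n f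

/-- An irreducible projective variety. -/
def IsIrredProjVariety (n : ℕ) (V : Set (Projectivization F (Fin (n + 1) → F))) : Prop :=
  IsProjVariety F n V ∧ V.Nonempty ∧
    ∀ A B : Set (Projectivization F (Fin (n + 1) → F)),
      IsProjVariety F n A → IsProjVariety F n B → V ⊆ A ∪ B → V ⊆ A ∨ V ⊆ B

/-- `W` is an irreducible component of `V`. -/
def IsProjIrredComponent (n : ℕ) (W V : Set (Projectivization F (Fin (n + 1) → F))) : Prop :=
  IsIrredProjVariety F n W ∧ W ⊆ V ∧
    ∀ W', IsIrredProjVariety F n W' → W ⊆ W' → W' ⊆ V → W' = W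

/-- Dimension of a projective variety, as the longest chain of irreducible
subvarieties; the empty set has dimension `-1`. -/
noncomputable def projDim (n : ℕ) (V : Set (Projectivization F (Fin (n + 1) → F))) : ℤ :=
  if V.Nonempty then
    ((sSup {m : ℕ | ∃ W : Fin (m + 1) → Set (Projectivization F (Fin (n + 1) → F)),
      (∀ i, IsIrredProjVariety F n (W i) ∧ W i ⊆ V) ∧
      ∀ i j, i < j → W i ⊂ W j} : ℕ) : ℤ)
  else -1

/-- `L` is a projective linear subspace of (projective) dimension `k` in `ℙ^n`. -/
def IsProjSubspaceOfDim (n k : ℕ) (L : Set (Projectivization F (Fin (n + 1) → F))) : Prop :=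
  ∃ E : Submodule F (Fin (n + 1) → F), Module.finrank F E = k + 1 ∧
    L = {x | x.rep ∈ E}

/-- Degree of an irreducible projective variety: the largest finite number of
points in its intersection with a linear subspace of complementary dimension. -/
noncomputable def projIrredDegree (n : ℕ) (V : Set (Projectivization F (Fin (n + 1) → F))) : ℕ :=
  sSup {m : ℕ | ∃ L, IsProjSubspaceOfDim F n (n - (projDim F n V).toNat) L ∧
    (V ∩ L).Finite ∧ (V ∩ L).ncard = m}

/-- Degree of a projective variety: the sum of the degrees of its irreducible
components. -/
noncomputable def projDegree (n : ℕ) (V : Set (Projectivization F (Fin (n + 1) → F))) : ℕ :=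
  ∑ᶠ W ∈ {W | IsProjIrredComponent F n W V}, projIrredDegree F n W

/-- `W` evades `V` if for every irreducible component `Vᵢ` of `V` one has
`dim (Vᵢ ∩ W) ≤ dim Vᵢ + dim W - n`. -/
def Evades (n : ℕ) (W V : Set (Projectivization F (Fin (n + 1) → F))) : Prop :=
  ∀ Vi, IsProjIrredComponent F n Vi V →
    projDim F n (Vi ∩ W) ≤ projDim F n Vi + projDim F n W - (n : ℤ)

/-!
If the restricted form vanished identically, then for all `s₀, …, s_r` the hyperplanes
`∑ⱼ sᵢʲ xⱼ = 0`, whose coefficient vectors lie on the moment curve, would have a common point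
on `V`. A nonempty variety lies in only finitely many hyperplanes of this family, since a point
`x` lies in the one given by `s` only when `s` is a root of the nonzero polynomial `∑ⱼ xⱼ Tʲ`.
So each hyperplane can be chosen to contain no irreducible component of what has been cut out
so far, and cutting `V` successively produces a strict chain of `r + 2` irreducible
subvarieties of `V`. Its top lies in an irreducible component of `V`, which then has
dimension at least `r + 1`, contradicting equidimensionality. The dimension is finite here
because irreducible varieties correspond to homogeneous prime ideals of `K[x₀, …, xₙ]`, a ring
of Krull dimension `n + 1`.
-/

attribute [local instance] MvPolynomial.gradedAlgebra

abbrev ProjSpace (K : Type) [Field K] (n : ℕ) := Projectivization K (Fin (n + 1) → K)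

theorem StrictMono.snoc {α : Type*} [Preorder α] {k : ℕ} {f : Fin (k + 1) → α}
    (hf : StrictMono f) {a : α} (ha : f (Fin.last k) < a) :
    StrictMono (Fin.snoc f a : Fin (k + 2) → α) := by
  rw [Fin.strictMono_iff_lt_succ]
  intro i
  cases i using Fin.lastCases with
  | last => simpa using ha
  | cast j =>
    rw [Fin.succ_castSucc, Fin.snoc_castSucc, Fin.snoc_castSucc]
    exact hf Fin.castSucc_lt_succ

theorem MvPolynomial.eval_aeval {R σ τ : Type*} [CommSemiring R] (t : τ → R)
    (g : σ → MvPolynomial τ R) (p : MvPolynomial σ R) :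
    eval t (aeval g p) = eval (fun i => eval t (g i)) p := by
  change aeval t _ = _
  rw [comp_aeval_apply, ← coe_aeval_eq_eval]
  rfl

section

variable {K : Type} [Field K] {n : ℕ}

theorem isProjVariety_projZeroSet {f : MvPolynomial (Fin (n + 1)) K} {m : ℕ}
    (hf : f.IsHomogeneous m) : IsProjVariety K n (projZeroSet K n f) :=
  ⟨{f}, fun g hg => ⟨m, by rwa [Set.mem_singleton_iff.1 hg]⟩, by simp⟩

theorem isProjVariety_empty : IsProjVariety K n (∅ : Set (ProjSpace K n)) := by
  refine ⟨{1}, fun f hf => ⟨0, Set.mem_singleton_iff.1 hf ▸ isHomogeneous_one _ _⟩, ?_⟩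
  simp [projZeroSet]

theorem isProjVariety_singleton (p : ProjSpace K n) : IsProjVariety K n {p} := by
  refine ⟨Set.range fun ij : Fin (n + 1) × Fin (n + 1) =>
    C (p.rep ij.1) * X ij.2 - C (p.rep ij.2) * X ij.1, ?_, ?_⟩
  · rintro _ ⟨ij, rfl⟩
    exact ⟨1, (isHomogeneous_C_mul_X _ _).sub (isHomogeneous_C_mul_X _ _)⟩
  ext x
  simp only [Set.mem_singleton_iff, Set.biInter_range, Set.mem_iInter, projZeroSet,
    Set.mem_ofPred_eq, map_sub, map_mul, eval_C, eval_X, Prod.forall]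
  constructor
  · rintro rfl i j
    ring
  · intro h
    obtain ⟨j₀, hj₀⟩ : ∃ j, p.rep j ≠ 0 := Function.ne_iff.mp p.rep_nonzero
    rw [← x.mk_rep, ← p.mk_rep, Projectivization.mk_eq_mk_iff']
    refine ⟨x.rep j₀ / p.rep j₀, funext fun i => ?_⟩
    rw [Pi.smul_apply, smul_eq_mul, div_mul_eq_mul_div, div_eq_iff hj₀]
    linear_combination -h j₀ i

namespace IsProjVariety

theorem inter {A B : Set (ProjSpace K n)} (hA : IsProjVariety K n A)
    (hB : IsProjVariety K n B) : IsProjVariety K n (A ∩ B) := by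
  obtain ⟨S, hS, rfl⟩ := hA
  obtain ⟨T, hT, rfl⟩ := hB
  exact ⟨S ∪ T, fun f hf => hf.elim (hS f) (hT f), (Set.biInter_union S T _).symm⟩

-- `Z(S) ∪ Z(T) = Z(S·T)`
theorem union {A B : Set (ProjSpace K n)} (hA : IsProjVariety K n A)
    (hB : IsProjVariety K n B) : IsProjVariety K n (A ∪ B) := by
  obtain ⟨S, hS, rfl⟩ := hA
  obtain ⟨T, hT, rfl⟩ := hB
  refine ⟨Set.image2 (· * ·) S T, ?_, ?_⟩
  · rintro _ ⟨g, hg, h, hh, rfl⟩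
    obtain ⟨mg, hmg⟩ := hS g hg
    obtain ⟨mh, hmh⟩ := hT h hh
    exact ⟨mg + mh, hmg.mul hmh⟩
  ext x
  simp only [Set.mem_union, Set.mem_iInter, projZeroSet, Set.mem_ofPred_eq, Set.mem_image2,
    forall_exists_index, and_imp]
  constructor
  · rintro (h | h) _ g hg g' hg' rfl <;> simp [h _ ‹_›]
  · intro h
    by_contra! hx
    obtain ⟨⟨g, hg, hgx⟩, ⟨g', hg', hg'x⟩⟩ := hx
    simpa [hgx, hg'x] using h _ g hg g' hg' rfl

theorem sUnion {S : Set (Set (ProjSpace K n))} (hS : S.Finite)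
    (hvar : ∀ U ∈ S, IsProjVariety K n U) : IsProjVariety K n (⋃₀ S) := by
  induction S, hS using Set.Finite.induction_on with
  | empty => simpa using isProjVariety_empty
  | insert _ _ ih =>
    rw [Set.sUnion_insert]
    exact (hvar _ (Set.mem_insert _ _)).union
      (ih fun U hU => hvar U (Set.mem_insert_of_mem _ hU))

theorem exists_separating {V : Set (ProjSpace K n)} (hV : IsProjVariety K n V)
    {x : ProjSpace K n} (hx : x ∉ V) :
    ∃ f : MvPolynomial (Fin (n + 1)) K, (∃ m, f.IsHomogeneous m) ∧
      (∀ y ∈ V, eval y.rep f = 0) ∧ eval x.rep f ≠ 0 := by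
  obtain ⟨S, hS, rfl⟩ := hV
  simp only [Set.mem_iInter, projZeroSet, Set.mem_ofPred_eq, not_forall] at hx
  obtain ⟨f, hf, hfx⟩ := hx
  exact ⟨f, hS f hf, fun y hy => Set.mem_iInter₂.1 hy f hf, hfx⟩

end IsProjVariety

theorem isIrredProjVariety_singleton (p : ProjSpace K n) : IsIrredProjVariety K n {p} :=
  ⟨isProjVariety_singleton p, Set.singleton_nonempty p, fun _ _ _ _ h =>
    (h rfl).imp Set.singleton_subset_iff.2 Set.singleton_subset_iff.2⟩

namespace IsIrredProjVariety

variable {W : Set (ProjSpace K n)}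

theorem vanishes_or_vanishes (hW : IsIrredProjVariety K n W)
    {f g : MvPolynomial (Fin (n + 1)) K} {mf mg : ℕ} (hf : f.IsHomogeneous mf)
    (hg : g.IsHomogeneous mg) (hfg : ∀ x ∈ W, eval x.rep (f * g) = 0) :
    (∀ x ∈ W, eval x.rep f = 0) ∨ ∀ x ∈ W, eval x.rep g = 0 :=
  hW.2.2 _ _ (isProjVariety_projZeroSet hf) (isProjVariety_projZeroSet hg)
    fun x hx => mul_eq_zero.1 (by simpa using hfg x hx)

theorem exists_subset_of_subset_sUnion (hW : IsIrredProjVariety K n W)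
    {S : Set (Set (ProjSpace K n))} (hS : S.Finite) (hvar : ∀ U ∈ S, IsProjVariety K n U)
    (hWS : W ⊆ ⋃₀ S) : ∃ U ∈ S, W ⊆ U := by
  induction S, hS using Set.Finite.induction_on with
  | empty => exact absurd (Set.subset_empty_iff.1 (Set.sUnion_empty ▸ hWS)) hW.2.1.ne_empty
  | @insert U S _ hS ih =>
    rw [Set.sUnion_insert] at hWS
    rcases hW.2.2 _ _ (hvar U (Set.mem_insert _ _))
        (IsProjVariety.sUnion hS fun V hV => hvar V (Set.mem_insert_of_mem _ hV)) hWS with h | h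
    · exact ⟨U, Set.mem_insert _ _, h⟩
    · obtain ⟨V, hV, hWV⟩ := ih (fun V hV => hvar V (Set.mem_insert_of_mem _ hV)) h
      exact ⟨V, Set.mem_insert_of_mem _ hV, hWV⟩

end IsIrredProjVariety

noncomputable def projVanishingIdeal (W : Set (ProjSpace K n)) :
    Ideal (MvPolynomial (Fin (n + 1)) K) :=
  Ideal.span {f | (∃ m, f.IsHomogeneous m) ∧ ∀ x ∈ W, eval x.rep f = 0}

section

variable {W W' : Set (ProjSpace K n)}

theorem eval_eq_zero_of_mem_projVanishingIdeal {f : MvPolynomial (Fin (n + 1)) K}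
    (hf : f ∈ projVanishingIdeal W) {x : ProjSpace K n} (hx : x ∈ W) : eval x.rep f = 0 := by
  have hker : projVanishingIdeal W ≤ RingHom.ker (eval x.rep) :=
    Ideal.span_le.2 fun g hg => hg.2 x hx
  exact hker hf

theorem homogeneous_mem_projVanishingIdeal_iff {f : MvPolynomial (Fin (n + 1)) K} {m : ℕ}
    (hf : f.IsHomogeneous m) : f ∈ projVanishingIdeal W ↔ ∀ x ∈ W, eval x.rep f = 0 :=
  ⟨fun h _ hx => eval_eq_zero_of_mem_projVanishingIdeal h hx,
    fun h => Ideal.subset_span ⟨⟨m, hf⟩, h⟩⟩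

theorem IsProjVariety.projVanishingIdeal_lt (hW' : IsProjVariety K n W') (h : W' ⊂ W) :
    projVanishingIdeal W < projVanishingIdeal W' := by
  refine lt_of_le_of_ne (Ideal.span_mono fun f hf => ⟨hf.1, fun x hx => hf.2 x (h.1 hx)⟩)
    fun heq => ?_
  obtain ⟨x, hxW, hxW'⟩ := Set.exists_of_ssubset h
  obtain ⟨f, ⟨m, hf⟩, hfW', hfx⟩ := hW'.exists_separating hxW'
  have hfW : f ∈ projVanishingIdeal W :=
    heq ▸ (homogeneous_mem_projVanishingIdeal_iff hf).2 hfW'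
  exact hfx (eval_eq_zero_of_mem_projVanishingIdeal hfW hxW)

theorem IsIrredProjVariety.isPrime_projVanishingIdeal (hW : IsIrredProjVariety K n W) :
    (projVanishingIdeal W).IsPrime := by
  have hhom : (projVanishingIdeal W).IsHomogeneous (homogeneousSubmodule (Fin (n + 1)) K) :=
    Ideal.homogeneous_span _ _ fun f ⟨⟨m, hf⟩, _⟩ => ⟨m, hf⟩
  refine hhom.isPrime_of_homogeneous_mem_or_mem ?_ ?_
  · rw [Ne, Ideal.eq_top_iff_one]
    obtain ⟨x, hx⟩ := hW.2.1
    intro h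
    simpa using eval_eq_zero_of_mem_projVanishingIdeal h hx
  · rintro f g ⟨mf, hf⟩ ⟨mg, hg⟩ hfg
    rw [mem_homogeneousSubmodule] at hf hg
    rw [homogeneous_mem_projVanishingIdeal_iff hf, homogeneous_mem_projVanishingIdeal_iff hg]
    exact hW.vanishes_or_vanishes hf hg fun x hx => eval_eq_zero_of_mem_projVanishingIdeal hfg hx

end

theorem length_le_of_strictMono_of_isIrredProjVariety {m : ℕ}
    {W : Fin (m + 1) → Set (ProjSpace K n)} (hW : ∀ i, IsIrredProjVariety K n (W i))
    (hmono : StrictMono W) : m ≤ n + 1 := by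
  let P : Fin (m + 1) → PrimeSpectrum (MvPolynomial (Fin (n + 1)) K) := fun i =>
    ⟨projVanishingIdeal (W i.rev), (hW i.rev).isPrime_projVanishingIdeal⟩
  have hP : StrictMono P := fun i j hij =>
    (PrimeSpectrum.asIdeal_lt_asIdeal _ _).1 <|
      (hW j.rev).1.projVanishingIdeal_lt (hmono (Fin.rev_lt_rev.2 hij))
  have := Order.LTSeries.length_le_krullDim (LTSeries.mk m P hP)
  rw [← ringKrullDim, MvPolynomial.ringKrullDim_of_isNoetherianRing,
    ringKrullDim_eq_zero_of_field, Nat.card_eq_fintype_card, Fintype.card_fin, zero_add] at this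
  exact_mod_cast this

theorem le_projDim_of_strictMono {V : Set (ProjSpace K n)} {m : ℕ}
    {W : Fin (m + 1) → Set (ProjSpace K n)} (hW : ∀ i, IsIrredProjVariety K n (W i) ∧ W i ⊆ V)
    (hmono : StrictMono W) : (m : ℤ) ≤ projDim K n V := by
  have hV : V.Nonempty := (hW 0).1.2.1.mono (hW 0).2
  rw [projDim, if_pos hV]
  refine Nat.cast_le.2 (le_csSup ⟨n + 1, ?_⟩ ⟨W, hW, fun i j hij => hmono hij⟩)
  rintro k ⟨W', hW', hmono'⟩
  exact length_le_of_strictMono_of_isIrredProjVariety (fun i => (hW' i).1)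
    fun i j hij => hmono' i j hij

theorem IsProjVariety.exists_finite_irreducible_sUnion_eq {V : Set (ProjSpace K n)}
    (hV : IsProjVariety K n V) :
    ∃ S : Set (Set (ProjSpace K n)), S.Finite ∧ (∀ U ∈ S, IsIrredProjVariety K n U) ∧
      ⋃₀ S = V := by
  induction V using (InvImage.wf (projVanishingIdeal (K := K) (n := n)) wellFounded_gt).induction
    with
  | _ V ih =>
    by_cases hirr : IsIrredProjVariety K n V
    · exact ⟨{V}, Set.finite_singleton V, by simpa using hirr, Set.sUnion_singleton V⟩
    rcases V.eq_empty_or_nonempty with rfl | hne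
    · exact ⟨∅, Set.finite_empty, by simp, Set.sUnion_empty⟩
    obtain ⟨A, B, hA, hB, hAB, hVA, hVB⟩ : ∃ A B, IsProjVariety K n A ∧ IsProjVariety K n B ∧
        V ⊆ A ∪ B ∧ ¬V ⊆ A ∧ ¬V ⊆ B := by
      simpa [IsIrredProjVariety, hV, hne] using hirr
    have hpiece : ∀ C, IsProjVariety K n C → ¬V ⊆ C →
        ∃ S : Set (Set (ProjSpace K n)), S.Finite ∧ (∀ U ∈ S, IsIrredProjVariety K n U) ∧
          ⋃₀ S = V ∩ C := fun C hC hVC =>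
      ih _ ((hV.inter hC).projVanishingIdeal_lt
        ⟨Set.inter_subset_left, fun h => hVC (h.trans Set.inter_subset_right)⟩) (hV.inter hC)
    obtain ⟨S₁, hS₁, hirr₁, hA⟩ := hpiece A hA hVA
    obtain ⟨S₂, hS₂, hirr₂, hB⟩ := hpiece B hB hVB
    refine ⟨S₁ ∪ S₂, hS₁.union hS₂, fun U hU => hU.elim (hirr₁ U) (hirr₂ U), ?_⟩
    rw [Set.sUnion_union, hA, hB, ← Set.inter_union_distrib_left, Set.inter_eq_left.2 hAB]

theorem IsIrredProjVariety.exists_isProjIrredComponent_superset {V W : Set (ProjSpace K n)}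
    (hW : IsIrredProjVariety K n W) (hV : IsProjVariety K n V) (hWV : W ⊆ V) :
    ∃ C, IsProjIrredComponent K n C V ∧ W ⊆ C := by
  obtain ⟨S, hS, hirr, rfl⟩ := hV.exists_finite_irreducible_sUnion_eq
  have hvar : ∀ U ∈ S, IsProjVariety K n U := fun U hU => (hirr U hU).1
  obtain ⟨U, hUS, hWU⟩ := hW.exists_subset_of_subset_sUnion hS hvar hWV
  obtain ⟨C, hUC, hCS, hCmax⟩ := hS.exists_le_maximal hUS
  refine ⟨C, ⟨hirr C hCS, Set.subset_sUnion_of_mem hCS, fun W' hW' hCW' hW'V => ?_⟩,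
    hWU.trans hUC⟩
  obtain ⟨U', hU'S, hW'U'⟩ := hW'.exists_subset_of_subset_sUnion hS hvar hW'V
  exact (hW'U'.trans (hCmax hU'S (hCW'.trans hW'U'))).antisymm hCW'

noncomputable def momentForm (n : ℕ) (s : K) : MvPolynomial (Fin (n + 1)) K :=
  ∑ j : Fin (n + 1), C (s ^ (j : ℕ)) * X j

theorem isHomogeneous_momentForm (s : K) : (momentForm n s).IsHomogeneous 1 :=
  IsHomogeneous.sum _ _ _ fun _ _ => isHomogeneous_C_mul_X _ _

theorem finite_setOf_subset_projZeroSet_momentForm {U : Set (ProjSpace K n)}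
    (hU : U.Nonempty) :
    {s : K | U ⊆ projZeroSet K n (momentForm n s)}.Finite := by
  obtain ⟨p, hp⟩ := hU
  let q : Polynomial K := ∑ j : Fin (n + 1), Polynomial.monomial j (p.rep j)
  have hq : q ≠ 0 := fun h => p.rep_nonzero <| funext fun j => by
    simpa [q, Polynomial.finsetSum_coeff, Polynomial.coeff_monomial, Fin.val_inj] using
      congrArg (Polynomial.coeff · j) h
  refine (Polynomial.finite_setOfPred_isRoot hq).subset fun s hs => ?_
  simpa [q, projZeroSet, momentForm, Polynomial.eval_finsetSum, mul_comm] using hs hp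

theorem IsProjVariety.exists_strictMono_of_inter_momentForm_nonempty [Infinite K] (k : ℕ)
    {X : Set (ProjSpace K n)} (hX : IsProjVariety K n X)
    (hmeet : ∀ s : Fin k → K, (X ∩ ⋂ i, projZeroSet K n (momentForm n (s i))).Nonempty) :
    ∃ W : Fin (k + 1) → Set (ProjSpace K n),
      (∀ i, IsIrredProjVariety K n (W i) ∧ W i ⊆ X) ∧ StrictMono W := by
  induction k generalizing X with
  | zero =>
    obtain ⟨p, hp, -⟩ := hmeet Fin.elim0
    exact ⟨fun _ => {p}, fun _ => ⟨isIrredProjVariety_singleton p,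
      Set.singleton_subset_iff.2 hp⟩, Subsingleton.strictMono (α := Fin 1) _⟩
  | succ k ih =>
    obtain ⟨S, hS, hirr, rfl⟩ := hX.exists_finite_irreducible_sUnion_eq
    obtain ⟨s₀, hs₀⟩ := (hS.biUnion fun U hU =>
      finite_setOf_subset_projZeroSet_momentForm (hirr U hU).2.1).exists_notMem
    simp only [Set.mem_iUnion, not_exists] at hs₀
    obtain ⟨W, hW, hmono⟩ :=
        ih (hX.inter (isProjVariety_projZeroSet (isHomogeneous_momentForm s₀))) fun s => by
        obtain ⟨x, hx, hxs⟩ := hmeet (Fin.cons s₀ s)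
        rw [Set.mem_iInter, Fin.forall_fin_succ] at hxs
        exact ⟨x, ⟨hx, hxs.1⟩, Set.mem_iInter.2 hxs.2⟩
    obtain ⟨U, hUS, hWU⟩ := (hW (Fin.last k)).1.exists_subset_of_subset_sUnion hS
      (fun U hU => (hirr U hU).1) ((hW _).2.trans Set.inter_subset_left)
    refine ⟨Fin.snoc W U, fun i => ?_, hmono.snoc ⟨hWU, fun hUW => ?_⟩⟩
    · cases i using Fin.lastCases with
      | last => simpa using ⟨hirr U hUS, Set.subset_sUnion_of_mem hUS⟩
      | cast i => simpa using ⟨(hW i).1, (hW i).2.trans Set.inter_subset_left⟩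
    · exact hs₀ U hUS (hUW.trans ((hW _).2.trans Set.inter_subset_right))

end

theorem chow_form_restriction_nonzero (n r : ℕ)
    (V : Set (Projectivization F (Fin (n + 1) → F)))
    (hV : IsProjVariety F n V)
    (hequi : ∀ W, IsProjIrredComponent F n W V → projDim F n W = (r : ℤ))
    (Ch : MvPolynomial (Fin (r + 1) × Fin (n + 1)) F)
    (hCh : ∀ γ : Fin (r + 1) → Fin (n + 1) → F,
      (V ∩ ⋂ i : Fin (r + 1),
        projZeroSet F n (∑ j : Fin (n + 1),
          MvPolynomial.C (γ i j) * MvPolynomial.X j)).Nonempty ↔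
        MvPolynomial.eval (fun p => γ p.1 p.2) Ch = 0) :
    MvPolynomial.aeval (fun p : Fin (r + 1) × Fin (n + 1) =>
      (MvPolynomial.X p.1 : MvPolynomial (Fin (r + 1)) F) ^ (p.2 : ℕ)) Ch ≠ 0 := by
  intro hzero
  have hmeet : ∀ s : Fin (r + 1) → F,
      (V ∩ ⋂ i, projZeroSet F n (momentForm n (s i))).Nonempty := fun s =>
    (hCh fun i j => s i ^ (j : ℕ)).2 <| by
      simpa only [eval_aeval, map_pow, eval_X, map_zero] using congrArg (eval s) hzero
  obtain ⟨W, hW, hmono⟩ := hV.exists_strictMono_of_inter_momentForm_nonempty (r + 1) hmeet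
  obtain ⟨C, hC, hWC⟩ :=
    (hW (Fin.last _)).1.exists_isProjIrredComponent_superset hV (hW _).2
  have hlen := le_projDim_of_strictMono
    (fun i => ⟨(hW i).1, (hmono.monotone (Fin.le_last i)).trans hWC⟩) hmono
  rw [hequi C hC] at hlen
  omega
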